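/- Let H be a real Hilbert space, r, s ∈ O(H), and v a unit vector with r(v) = v. Fix ε₁ > 0 and suppose ⟨s(v), v⟩ ≥ ε₁. Then for any positive integer l₁ with l₁ ≥ 2/ε₁² + 1, there exists l̃ ∈ {1, ..., l₁} such that ⟨s(v), r^{l̃}(s(v))⟩ ≥ ε₁²/2. -/

import Mathlib

/-!
Put `w k = r^k (s v)` and `α = ⟪s v, v⟫`. Since `r` is orthogonal and fixes `v`, each `w k` is a
unit vector with `⟪w k, v⟫ = α`, and `⟪w i, w (i + k)⟫ = ⟪s v, w k⟫`. If `⟪s v, w k⟫ < ε₁² / 2` for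
all `1 ≤ k ≤ l₁`, the `l₁ + 1` vectors `w k - α v` have Gram matrix with diagonal `1 - α²` and
off-diagonal entries below `ε₁² / 2 - α² ≤ -ε₁² / 2`. Nonnegativity of the squared norm of their
sum then gives `0 ≤ 1 - α² - l₁ ε₁² / 2`, which contradicts `l₁ ε₁² ≥ 2 + ε₁²`.
-/

open Finset RealInnerProductSpace

section
variable {E : Type*} [NormedAddCommGroup E] [InnerProductSpace ℝ E]

theorem LinearIsometryEquiv.inner_iterate_map_map (r : E ≃ₗᵢ[ℝ] E) (n : ℕ) (x y : E) :
    ⟪r^[n] x, r^[n] y⟫ = ⟪x, y⟫ := by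
  simpa [LinearIsometry.coe_pow] using (r.toLinearIsometry ^ n).inner_map_map x y

theorem LinearIsometryEquiv.inner_iterate_map_iterate_add (r : E ≃ₗᵢ[ℝ] E) (i k : ℕ) (x : E) :
    ⟪r^[i] x, r^[i + k] x⟫ = ⟪x, r^[k] x⟫ := by
  rw [Function.iterate_add_apply, r.inner_iterate_map_map]

theorem add_card_sub_one_mul_nonneg_of_inner_le {ι : Type*} [DecidableEq ι] {s : Finset ι}
    (hs : s.Nonempty) {x : ι → E} {a b : ℝ} (hdiag : ∀ i ∈ s, ⟪x i, x i⟫ ≤ a)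
    (hoff : ∀ i ∈ s, ∀ j ∈ s, i ≠ j → ⟪x i, x j⟫ ≤ b) :
    0 ≤ a + (#s - 1 : ℝ) * b := by
  have hrow : ∀ i ∈ s, ∑ j ∈ s, ⟪x i, x j⟫ ≤ a + (#s - 1 : ℝ) * b := by
    intro i hi
    rw [← add_sum_erase s _ hi]
    gcongr
    · exact hdiag i hi
    · calc ∑ j ∈ s.erase i, ⟪x i, x j⟫ ≤ #(s.erase i) • b :=
            sum_le_card_nsmul _ _ _ fun j hj ↦
              hoff i hi j (mem_of_mem_erase hj) (ne_of_mem_erase hj).symm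
        _ = (#s - 1 : ℝ) * b := by
            rw [card_erase_of_mem hi, nsmul_eq_mul, Nat.cast_pred hs.card_pos]
  have hgram : 0 ≤ ∑ i ∈ s, ∑ j ∈ s, ⟪x i, x j⟫ := by
    have := real_inner_self_nonneg (x := ∑ i ∈ s, x i)
    simp_rw [sum_inner, inner_sum] at this
    exact this
  have := hgram.trans (sum_le_card_nsmul s _ _ hrow)
  rw [nsmul_eq_mul] at this
  exact (mul_nonneg_iff_of_pos_left (by exact_mod_cast hs.card_pos)).mp this

theorem inner_sub_smul_sub_smul_of_inner_eq {u y z : E} (hu : ‖u‖ = 1) {α : ℝ}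
    (hy : ⟪y, u⟫ = α) (hz : ⟪z, u⟫ = α) : ⟪y - α • u, z - α • u⟫ = ⟪y, z⟫ - α ^ 2 := by
  simp only [inner_sub_left, inner_sub_right, real_inner_smul_left, real_inner_smul_right,
    real_inner_comm z u, hy, hz]
  rw [real_inner_self_eq_norm_sq, hu]
  ring

theorem LinearIsometryEquiv.norm_sq_sub_add_mul_nonneg_of_inner_iterate_le (r : E ≃ₗᵢ[ℝ] E)
    {u x : E} (hu : ‖u‖ = 1) (hru : r u = u) {c : ℝ} {n : ℕ}
    (hc : ∀ k ∈ Icc 1 n, ⟪x, r^[k] x⟫ ≤ c) :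
    0 ≤ ‖x‖ ^ 2 - ⟪x, u⟫ ^ 2 + n * (c - ⟪x, u⟫ ^ 2) := by
  set α := ⟪x, u⟫
  have horbit : ∀ k, ⟪r^[k] x, u⟫ = α := fun k ↦ by
    rw [← Function.iterate_fixed hru k, r.inner_iterate_map_map]
  have hlt : ∀ i j, i < j → j ≤ n → ⟪r^[i] x, r^[j] x⟫ ≤ c := fun i j hij hj ↦ by
    obtain ⟨k, rfl⟩ := Nat.exists_eq_add_of_lt hij
    rw [add_assoc, r.inner_iterate_map_iterate_add]
    exact hc _ (mem_Icc.mpr ⟨by omega, by omega⟩)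
  have := add_card_sub_one_mul_nonneg_of_inner_le (s := range (n + 1))
    (x := fun k ↦ r^[k] x - α • u) (a := ‖x‖ ^ 2 - α ^ 2) (b := c - α ^ 2) nonempty_range_add_one
    (fun i _ ↦ by
      rw [inner_sub_smul_sub_smul_of_inner_eq hu (horbit i) (horbit i), r.inner_iterate_map_map,
        real_inner_self_eq_norm_sq])
    (fun i hi j hj hij ↦ by
      rw [inner_sub_smul_sub_smul_of_inner_eq hu (horbit i) (horbit j), sub_le_sub_iff_right]
      rw [mem_range] at hi hj
      rcases hij.lt_or_gt with h | h
      · exact hlt i j h (by omega)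
      · rw [real_inner_comm]
        exact hlt j i h (by omega))
  simpa using this

end

theorem stmt2_general {H : Type*} [NormedAddCommGroup H] [InnerProductSpace ℝ H]
    (r s : H ≃ₗᵢ[ℝ] H) (v : H) (hv : ‖v‖ = 1) (hrv : r v = v)
    (ε₁ : ℝ) (hε : 0 < ε₁) (hsv : (inner ℝ (s v) v : ℝ) ≥ ε₁)
    (l₁ : ℕ) (hl₁ : (l₁ : ℝ) ≥ 2 / ε₁ ^ 2 + 1) :
    ∃ l ∈ Finset.Icc 1 l₁, (inner ℝ (s v) ((⇑r)^[l] (s v)) : ℝ) ≥ ε₁ ^ 2 / 2 := by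
  by_contra! hsmall
  have hgram := r.norm_sq_sub_add_mul_nonneg_of_inner_iterate_le hv hrv (c := ε₁ ^ 2 / 2)
    fun k hk ↦ (hsmall k hk).le
  rw [s.norm_map, hv] at hgram
  have hl₁ε : 2 + ε₁ ^ 2 ≤ l₁ * ε₁ ^ 2 := by
    have := mul_le_mul_of_nonneg_right hl₁ (sq_nonneg ε₁)
    rwa [add_mul, div_mul_cancel₀ _ (by positivity), one_mul] at this
  have hαε : ε₁ ^ 2 ≤ ⟪s v, v⟫ ^ 2 := pow_le_pow_left₀ hε.le hsv 2
  nlinarith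

/-- Let `r, s` be orthogonal transformations of a real Hilbert space,
`v` a unit vector with `r v = v`, `ε₁ > 0` with `⟨s v, v⟩ ≥ ε₁`. Then for any
positive integer `l₁ ≥ 2/ε₁² + 1` there is `l̃ ∈ {1, ..., l₁}` with
`⟨s v, r^{l̃}(s v)⟩ ≥ ε₁²/2`. -/
theorem stmt2 {H : Type*} [NormedAddCommGroup H] [InnerProductSpace ℝ H]
    [CompleteSpace H] (r s : H ≃ₗᵢ[ℝ] H) (v : H) (hv : ‖v‖ = 1) (hrv : r v = v)
    (ε₁ : ℝ) (hε : 0 < ε₁) (hsv : (inner ℝ (s v) v : ℝ) ≥ ε₁)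
    (l₁ : ℕ) (hl₁pos : 0 < l₁) (hl₁ : (l₁ : ℝ) ≥ 2 / ε₁ ^ 2 + 1) :
    ∃ l ∈ Finset.Icc 1 l₁, (inner ℝ (s v) ((⇑r)^[l] (s v)) : ℝ) ≥ ε₁ ^ 2 / 2 :=
  stmt2_general r s v hv hrv ε₁ hε hsv l₁ hl₁
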